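/- Let G be an infinite Hausdorff topological group. Then pd(G) ≤ pd(G•), where G• is the Hartman–Mycielski group of G. -/

import Mathlib

open Cardinal Set Topology

universe u v

/-- A neighborhood assignment on a topological space. -/
def NbhdAssign {X : Type u} [TopologicalSpace X] (U : X → Set X) : Prop :=
  ∀ x, IsOpen (U x) ∧ x ∈ U x

/-- The pinning down number of a family of sets: the least cardinality of a set
meeting every nonempty member of the family. -/
noncomputable def pdFam {α : Type u} (𝒜 : Set (Set α)) : Cardinal.{u} :=
  sInf {c | ∃ A : Set α, #A = c ∧ ∀ S ∈ 𝒜, S.Nonempty → (A ∩ S).Nonempty}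

/-- The pinning down number of a neighborhood assignment. -/
noncomputable def pdAssign {X : Type u} [TopologicalSpace X] (U : X → Set X) : Cardinal.{u} :=
  sInf {c | ∃ A : Set X, #A = c ∧ ∀ x, (A ∩ U x).Nonempty}

/-- The pinning down number of a topological space. -/
noncomputable def pdSpace (X : Type u) [TopologicalSpace X] : Cardinal.{u} :=
  ⨆ U : {U : X → Set X // NbhdAssign U}, pdAssign U.1

/-- The density of a topological space. -/
noncomputable def density (X : Type u) [TopologicalSpace X] : Cardinal.{u} :=
  sInf {c | ∃ D : Set X, #D = c ∧ Dense D}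

/-- The cellularity of a topological space. -/
noncomputable def cellularity (X : Type u) [TopologicalSpace X] : Cardinal.{u} :=
  ⨆ 𝒞 : {C : Set (Set X) // (∀ U ∈ C, IsOpen U ∧ U.Nonempty) ∧ C.PairwiseDisjoint id}, #𝒞.1

/-- `Δ(X)`: the least cardinality of a nonempty open subset of `X`. -/
noncomputable def Delta (X : Type u) [TopologicalSpace X] : Cardinal.{u} :=
  sInf {c | ∃ G : Set X, IsOpen G ∧ G.Nonempty ∧ #G = c}

/-- A space is neat if `Δ(X) = |X|`. -/
def Neat (X : Type u) [TopologicalSpace X] : Prop := Delta X = #X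

/-- `f : ℝ → G` is a step function on `J = [0,1)`: there are
`0 = a 0 < a 1 < ⋯ < a n = 1` such that `f` is constant on each `[a i, a (i+1))`. -/
def IsStep {G : Type u} (f : ℝ → G) : Prop :=
  ∃ (n : ℕ) (a : ℕ → ℝ), 0 < n ∧ a 0 = 0 ∧ a n = 1 ∧ (∀ i < n, a i < a (i + 1)) ∧
    ∀ i < n, ∀ x ∈ Set.Ico (a i) (a (i + 1)), f x = f (a i)

/-- The underlying set of the Hartman–Mycielski group `G•`: step functions `J → G`. -/
def HM (G : Type u) : Type u := {f : ℝ → G // IsStep f}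

/-- The basic neighborhood `f * O(V, ε)` in `G•`:
all step functions `g` with `μ {r ∈ J : f(r)⁻¹ g(r) ∉ V} < ε`. -/
def HMBall {G : Type u} [Group G] (f : ℝ → G) (V : Set G) (ε : ℝ) : Set (HM G) :=
  {g | MeasureTheory.volume {r ∈ Set.Ico (0 : ℝ) 1 | (f r)⁻¹ * g.1 r ∉ V} < ENNReal.ofReal ε}

/-- The Hartman–Mycielski topology on `G•`, generated by the translated basic
neighborhoods `f * O(V, ε)` for `V` a neighborhood of the identity of `G` and `ε > 0`. -/
noncomputable instance HMTopology (G : Type u) [Group G] [TopologicalSpace G] :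
    TopologicalSpace (HM G) :=
  TopologicalSpace.generateFrom
    {S | ∃ (f : HM G) (V : Set G) (ε : ℝ), V ∈ nhds (1 : G) ∧ 0 < ε ∧ S = HMBall f.1 V ε}

/-- The canonical embedding `x ↦ x•` of `G` into `G•` (constant step functions). -/
def HM.const {G : Type u} (x : G) : HM G :=
  ⟨fun _ => x, 1, fun n => (n : ℝ), one_pos, by norm_num, by norm_num,
    fun i hi => by interval_cases i; norm_num, fun _ _ _ _ => rfl⟩


section AuxHM

open MeasureTheory

variable {G : Type u} [Group G] [TopologicalSpace G]

lemma HMBall_isOpen (f : HM G) {V : Set G} {ε : ℝ} (hV : V ∈ nhds (1:G)) (hε : 0 < ε) :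
    IsOpen (HMBall f.1 V ε) :=
  TopologicalSpace.GenerateOpen.basic _ ⟨f, V, ε, hV, hε, rfl⟩

lemma mem_HMBall_self (f : HM G) {V : Set G} {ε : ℝ} (hV : V ∈ nhds (1:G)) (hε : 0 < ε) :
    f ∈ HMBall f.1 V ε := by
  have h1 : (1:G) ∈ V := mem_of_mem_nhds hV
  have : {r ∈ Set.Ico (0:ℝ) 1 | (f.1 r)⁻¹ * f.1 r ∉ V} = ∅ := by
    ext r; simp [h1]
  show MeasureTheory.volume {r ∈ Set.Ico (0:ℝ) 1 | (f.1 r)⁻¹ * f.1 r ∉ V} < ENNReal.ofReal ε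
  rw [this]
  simpa using ENNReal.ofReal_pos.mpr hε

lemma pdAssign_le {X : Type v} [TopologicalSpace X] {U : X → Set X} {A : Set X}
    (hA : ∀ x, (A ∩ U x).Nonempty) : pdAssign U ≤ #A :=
  csInf_le' ⟨A, rfl, hA⟩

lemma pdAssign_exists {X : Type v} [TopologicalSpace X] {U : X → Set X}
    (hU : ∀ x, x ∈ U x) :
    ∃ A : Set X, #A = pdAssign U ∧ ∀ x, (A ∩ U x).Nonempty := by
  have hne : {c | ∃ A : Set X, #A = c ∧ ∀ x, (A ∩ U x).Nonempty}.Nonempty :=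
    ⟨#(Set.univ : Set X), Set.univ, rfl, fun x => ⟨x, Set.mem_univ x, hU x⟩⟩
  exact csInf_mem hne

lemma pdAssign_le_pdSpace {X : Type v} [TopologicalSpace X] {U : X → Set X}
    (hU : NbhdAssign U) : pdAssign U ≤ pdSpace X := by
  have hbdd : BddAbove (Set.range fun (W : {U : X → Set X // NbhdAssign U}) => pdAssign W.1) := by
    refine ⟨#X, ?_⟩
    rintro c ⟨W, rfl⟩
    refine (pdAssign_le (A := Set.univ) (fun x => ⟨x, Set.mem_univ x, (W.2 x).2⟩)).trans ?_
    simp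
  exact le_ciSup hbdd ⟨U, hU⟩

lemma HM.finite_image {H : Type v} (g : HM H) : (g.1 '' Set.Ico (0:ℝ) 1).Finite := by
  obtain ⟨n, a, hn, h0, h1, hlt, hc⟩ := g.2
  apply Set.Finite.subset (Set.finite_range fun i : Fin n => g.1 (a i))
  rintro y ⟨x, hx, rfl⟩
  have hP0 : a 0 ≤ x := by rw [h0]; exact hx.1
  classical
  set i := Nat.findGreatest (fun j => a j ≤ x) n with hidef
  have hile : i ≤ n := Nat.findGreatest_le n
  have hai : a i ≤ x :=
    Nat.findGreatest_spec (P := fun j => a j ≤ x) (Nat.zero_le n) hP0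
  have hin : i < n := by
    rcases lt_or_eq_of_le hile with h | h
    · exact h
    · exfalso; rw [h, h1] at hai; exact absurd hx.2 (not_lt.2 hai)
  have hxlt : x < a (i + 1) := by
    by_contra hcon
    exact Nat.findGreatest_is_greatest (Nat.lt_succ_self i) hin (not_lt.1 hcon)
  exact ⟨⟨i, hin⟩, (hc i hin x ⟨hai, hxlt⟩).symm⟩

lemma HM.const_inj {x y : G} (h : HM.const x = HM.const y) : x = y :=
  congrFun (congrArg Subtype.val h) 0

/-- half of the auxiliary step function structure -/
lemma isStep_ite {H : Type v} (a b : H) {c : ℝ} (hc0 : 0 < c) (hc1 : c < 1) :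
    IsStep (fun r => if r < c then a else b) := by
  refine ⟨2, fun i => if i = 0 then 0 else if i = 1 then c else 1, two_pos,
    by norm_num, by norm_num, ?_, ?_⟩
  · intro i hi; interval_cases i <;> simp [hc0, hc1]
  · intro i hi x hx
    interval_cases i
    · exact (if_pos hx.2).trans (if_pos hc0).symm
    · exact (if_neg (not_lt.2 hx.1)).trans (if_neg (lt_irrefl c)).symm

/-- the times for the disjoint family construction -/
noncomputable def tHM (n : ℕ) : ℝ := 1 - (1/2)^(n+1)

lemma tHM_pos (n : ℕ) : 0 < tHM n := by
  have : (1/2:ℝ)^(n+1) ≤ (1/2)^1 := pow_le_pow_of_le_one (by norm_num) (by norm_num) (by omega)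
  simp only [tHM]; norm_num at this ⊢; linarith

lemma tHM_lt_one (n : ℕ) : tHM n < 1 := by
  have : (0:ℝ) < (1/2)^(n+1) := by positivity
  simp only [tHM]; linarith

lemma tHM_strictMono {n m : ℕ} (h : n < m) : tHM n < tHM m := by
  have : (1/2:ℝ)^(m+1) < (1/2)^(n+1) :=
    pow_lt_pow_right_of_lt_one₀ (by norm_num) (by norm_num) (by omega)
  simp only [tHM]; linarith

/-- the disjoint family of step functions -/
noncomputable def FHM (a : G) (n : ℕ) : HM G :=
  ⟨fun r => if r < tHM n then a else 1, isStep_ite a 1 (tHM_pos n) (tHM_lt_one n)⟩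

lemma FHM_inj {a : G} (ha : a ≠ 1) : Function.Injective (FHM (G := G) a) := by
  have key : ∀ n m : ℕ, n < m → FHM (G := G) a n ≠ FHM a m := by
    intro n m hnm heq
    have := congrFun (congrArg Subtype.val heq) (tHM n)
    simp only [FHM] at this
    rw [if_neg (lt_irrefl (tHM n)), if_pos (tHM_strictMono hnm)] at this
    exact ha this.symm
  intro n m h
  by_contra hne
  rcases lt_or_gt_of_ne hne with hlt | hlt
  · exact key n m hlt h
  · exact key m n hlt h.symm

lemma FHM_disjoint {a : G} {V : Set G} (hVa : ∀ v ∈ V, ∀ w ∈ V, v / w ∈ ({a}ᶜ : Set G))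
    {n m : ℕ} (hnm : n < m) (h : HM G)
    (h1 : h ∈ HMBall (FHM a n).1 V ((1/2)^(n+4)))
    (h2 : h ∈ HMBall (FHM a m).1 V ((1/2)^(m+4))) : False := by
  set N := {r ∈ Set.Ico (0:ℝ) 1 | ((FHM a n).1 r)⁻¹ * h.1 r ∉ V} with hN
  set M := {r ∈ Set.Ico (0:ℝ) 1 | ((FHM a m).1 r)⁻¹ * h.1 r ∉ V} with hM
  have hsub : Set.Ico (tHM n) (tHM m) ⊆ N ∪ M := by
    intro r hr
    have hr01 : r ∈ Set.Ico (0:ℝ) 1 :=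
      ⟨(tHM_pos n).le.trans hr.1, hr.2.trans (tHM_lt_one m)⟩
    by_contra hcon
    simp only [Set.mem_union, not_or] at hcon
    have hrN : ((FHM a n).1 r)⁻¹ * h.1 r ∈ V := by
      by_contra hx; exact hcon.1 ⟨hr01, hx⟩
    have hrM : ((FHM a m).1 r)⁻¹ * h.1 r ∈ V := by
      by_contra hx; exact hcon.2 ⟨hr01, hx⟩
    have hFn : (FHM a n).1 r = 1 := if_neg (not_lt.2 hr.1)
    have hFm : (FHM a m).1 r = a := if_pos hr.2
    rw [hFn] at hrN; rw [hFm] at hrM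
    have := hVa _ hrN _ hrM
    apply this
    rw [Set.mem_singleton_iff]
    simp [div_eq_mul_inv, mul_inv_rev]
  -- measure estimate
  have hmeas : ENNReal.ofReal (tHM m - tHM n) ≤ volume N + volume M := by
    calc ENNReal.ofReal (tHM m - tHM n) = volume (Set.Ico (tHM n) (tHM m)) :=
          (Real.volume_Ico).symm
      _ ≤ volume (N ∪ M) := measure_mono hsub
      _ ≤ volume N + volume M := measure_union_le N M
  have hlt : volume N + volume M <
      ENNReal.ofReal ((1/2:ℝ)^(n+4)) + ENNReal.ofReal ((1/2:ℝ)^(m+4)) :=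
    ENNReal.add_lt_add h1 h2
  have hreal : (1/2:ℝ)^(n+4) + (1/2)^(m+4) ≤ tHM m - tHM n := by
    have e1 : (1/2:ℝ)^(n+4) = (1/2)^(n+1) * (1/2)^3 := by rw [← pow_add]
    have e2 : (1/2:ℝ)^(m+4) = (1/2)^(m+1) * (1/2)^3 := by rw [← pow_add]
    have e3 : (1/2:ℝ)^(m+1) ≤ (1/2)^(n+1) * (1/2) := by
      rw [← pow_succ]
      exact pow_le_pow_of_le_one (by norm_num) (by norm_num) (by omega)
    have e4 : (0:ℝ) < (1/2)^(m+1) := by positivity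
    simp only [tHM]
    norm_num at e1 e2 e3 ⊢
    nlinarith
  have : ENNReal.ofReal ((1/2:ℝ)^(n+4)) + ENNReal.ofReal ((1/2:ℝ)^(m+4)) ≤
      ENNReal.ofReal (tHM m - tHM n) := by
    rw [← ENNReal.ofReal_add (by positivity) (by positivity)]
    exact ENNReal.ofReal_le_ofReal hreal
  exact absurd (hmeas.trans_lt (hlt.trans_le this)) (lt_irrefl _)

end AuxHM

section LowerBound

open MeasureTheory

lemma aleph0_le_pdSpace_HM (G : Type u) [Group G] [TopologicalSpace G] [IsTopologicalGroup G]
    [T2Space G] [Nontrivial G] : ℵ₀ ≤ pdSpace (HM G) := by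
  obtain ⟨a, ha⟩ := exists_ne (1 : G)
  have hac : ({a}ᶜ : Set G) ∈ nhds (1 : G) :=
    IsOpen.mem_nhds isOpen_compl_singleton (by simpa using ha.symm)
  obtain ⟨V, hV, hVa⟩ := exists_nhds_split_inv hac
  classical
  set W : HM G → Set (HM G) := fun f =>
    if h : ∃ n, f = FHM a n then HMBall f.1 V ((1/2)^(h.choose+4)) else Set.univ with hWdef
  have hWassign : NbhdAssign W := by
    intro f
    by_cases h : ∃ n, f = FHM a n
    · rw [hWdef]; simp only [dif_pos h]
      exact ⟨HMBall_isOpen f hV (by positivity), mem_HMBall_self f hV (by positivity)⟩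
    · rw [hWdef]; simp only [dif_neg h]
      exact ⟨isOpen_univ, Set.mem_univ f⟩
  have hWF : ∀ n, W (FHM a n) = HMBall (FHM a n).1 V ((1/2)^(n+4)) := by
    intro n
    have hex : ∃ k, FHM (G := G) a n = FHM a k := ⟨n, rfl⟩
    have hch : hex.choose = n := (FHM_inj ha hex.choose_spec).symm
    rw [hWdef]; simp only [dif_pos hex, hch]
  have hW : ℵ₀ ≤ pdAssign W := by
    apply le_csInf
    · exact ⟨#(Set.univ : Set (HM G)), Set.univ, rfl,
        fun f => ⟨f, Set.mem_univ f, (hWassign f).2⟩⟩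
    rintro c ⟨A, rfl, hA⟩
    have hsel : ∀ n : ℕ, ∃ g : A, (g : HM G) ∈ W (FHM a n) := by
      intro n
      obtain ⟨g, hgA, hgW⟩ := hA (FHM a n)
      exact ⟨⟨g, hgA⟩, hgW⟩
    choose sel hsel using hsel
    have hinj : Function.Injective sel := by
      intro n m hnm
      by_contra hne
      have h1 := hsel n
      have h2 := hsel m
      rw [hnm] at h1
      rw [hWF] at h1 h2
      rcases lt_or_gt_of_ne hne with hlt | hlt
      · exact FHM_disjoint hVa hlt _ h1 h2
      · exact FHM_disjoint hVa hlt _ h2 h1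
    haveI : Infinite A := Infinite.of_injective sel hinj
    exact Cardinal.aleph0_le_mk A
  exact hW.trans (pdAssign_le_pdSpace hWassign)

end LowerBound

/-- for an infinite Hausdorff topological group `G`,
`pd(G) ≤ pd(G•)` where `G•` is the Hartman–Mycielski group of `G`. -/
theorem pd_le_pd_HM (G : Type u) [Group G] [TopologicalSpace G] [IsTopologicalGroup G]
    [T2Space G] [Infinite G] :
    pdSpace G ≤ pdSpace (HM G) := by
  classical
  have hℵ : ℵ₀ ≤ pdSpace (HM G) := aleph0_le_pdSpace_HM G
  haveI : Nonempty {U : G → Set G // NbhdAssign U} :=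
    ⟨⟨fun _ => Set.univ, fun x => ⟨isOpen_univ, Set.mem_univ x⟩⟩⟩
  refine ciSup_le fun W => ?_
  obtain ⟨U, hU⟩ := W
  -- translate the assignment to neighborhoods of 1
  set V : G → Set G := fun x => (fun v => x * v) ⁻¹' U x with hVdef
  have hV1 : ∀ x, V x ∈ nhds (1 : G) := by
    intro x
    apply IsOpen.mem_nhds ((hU x).1.preimage (continuous_mul_left x))
    show x * 1 ∈ U x
    simpa using (hU x).2
  -- the assignment on HM G
  set Wd : HM G → Set (HM G) := fun f =>
    if h : ∃ x : G, f = HM.const x then HMBall f.1 (V h.choose) (1/2) else Set.univ with hWdef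
  have hWassign : NbhdAssign Wd := by
    intro f
    by_cases h : ∃ x : G, f = HM.const x
    · rw [hWdef]; simp only [dif_pos h]
      exact ⟨HMBall_isOpen f (hV1 _) (by norm_num), mem_HMBall_self f (hV1 _) (by norm_num)⟩
    · rw [hWdef]; simp only [dif_neg h]
      exact ⟨isOpen_univ, Set.mem_univ f⟩
  have hWc : ∀ x : G, Wd (HM.const x) = HMBall (HM.const x).1 (V x) (1/2) := by
    intro x
    have hex : ∃ y : G, HM.const x = HM.const y := ⟨x, rfl⟩
    have hch : hex.choose = x := (HM.const_inj hex.choose_spec).symm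
    rw [hWdef]; simp only [dif_pos hex, hch]
  obtain ⟨B, hBcard, hBpin⟩ := pdAssign_exists (fun f => (hWassign f).2)
  -- the pinning set in G
  set A : Set G := ⋃ g ∈ B, g.1 '' Set.Ico (0:ℝ) 1 with hAdef
  have hApin : ∀ x : G, (A ∩ U x).Nonempty := by
    intro x
    obtain ⟨g, hgB, hgW⟩ := hBpin (HM.const x)
    rw [hWc] at hgW
    have hball : MeasureTheory.volume
        {r ∈ Set.Ico (0:ℝ) 1 | ((HM.const x).1 r)⁻¹ * g.1 r ∉ V x} < ENNReal.ofReal (1/2) := hgW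
    have hex : ∃ r ∈ Set.Ico (0:ℝ) 1, x⁻¹ * g.1 r ∈ V x := by
      by_contra hcon
      push_neg at hcon
      have heq : {r ∈ Set.Ico (0:ℝ) 1 | ((HM.const x).1 r)⁻¹ * g.1 r ∉ V x}
          = Set.Ico (0:ℝ) 1 := by
        ext r
        simp only [Set.mem_setOf_eq, Set.mem_Ico, and_iff_left_iff_imp]
        intro hr
        exact hcon r hr
      rw [heq, Real.volume_Ico] at hball
      norm_num at hball
    obtain ⟨r, hr, hrV⟩ := hex
    refine ⟨g.1 r, ?_, ?_⟩
    · exact Set.mem_biUnion hgB ⟨r, hr, rfl⟩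
    · have hmem : x * (x⁻¹ * g.1 r) ∈ U x := hrV
      simpa using hmem
  -- cardinality bound
  haveI hBne : Nonempty B := by
    obtain ⟨g, hgB, _⟩ := hBpin (HM.const (Classical.arbitrary G))
    exact ⟨⟨g, hgB⟩⟩
  have hAcard : #A ≤ max (#B) ℵ₀ := by
    calc #A ≤ #B * ⨆ g : B, #((g : HM G).1 '' Set.Ico (0:ℝ) 1) :=
          Cardinal.mk_biUnion_le _ _
      _ ≤ #B * ℵ₀ := by
          apply mul_le_mul_right
          exact ciSup_le' fun g => (HM.finite_image (g : HM G)).lt_aleph0.le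
      _ ≤ max (max (#B) ℵ₀) ℵ₀ := Cardinal.mul_le_max _ _
      _ = max (#B) ℵ₀ := by rw [max_assoc, max_self]
  calc pdAssign U ≤ #A := pdAssign_le hApin
    _ ≤ max (#B) ℵ₀ := hAcard
    _ = max (pdAssign Wd) ℵ₀ := by rw [hBcard]
    _ ≤ max (pdSpace (HM G)) ℵ₀ :=
        max_le_max (pdAssign_le_pdSpace hWassign) le_rfl
    _ = pdSpace (HM G) := max_eq_left hℵ
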